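/- Suppose the measured data (X₊,X,U) are generated as in the state-feedback data setting under Assumption 1, and let N := [E 𝐗]Φ̂[E 𝐗]ᵀ ∈ S^{2n+m}. If there exist P ≻ 0 ∈ S^n, L ∈ ℝ^{m×n}, α ≥ 0, and β > 0 such that ℳ(P,L,β) − α·diag(N,0_n) ⪰ 0, then N ∈ Π_{n,n+m}. -/

import Mathlib

open Matrix

noncomputable section

/-- Moore–Penrose pseudoinverse of a real square matrix, defined via classical choice
(the Moore–Penrose inverse exists and is unique for real matrices). -/
def pinv {k : Type*} [Fintype k] (A : Matrix k k ℝ) : Matrix k k ℝ := by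
  classical
  exact if h : ∃ B : Matrix k k ℝ,
      A * B * A = A ∧ B * A * B = B ∧ (A * B)ᵀ = A * B ∧ (B * A)ᵀ = B * A
    then h.choose else 0

/-- Positive semidefinite square root of a real matrix (junk value `0` if not PSD). -/
def msqrt {k : Type*} [Fintype k] [DecidableEq k] (A : Matrix k k ℝ) : Matrix k k ℝ := by
  classical
  exact if h : A.PosSemidef then
      (h.1.eigenvectorUnitary : Matrix k k ℝ) *
        diagonal ((↑) ∘ Real.sqrt ∘ h.1.eigenvalues) * (star h.1.eigenvectorUnitary : Matrix k k ℝ)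
    else 0

/-- `Z_{q,r}(N) = { Z : [I; Z]ᵀ N [I; Z] ⪰ 0 }`. -/
def ZSet {q r : Type*} [Fintype q] [Fintype r] [DecidableEq q]
    (N : Matrix (q ⊕ r) (q ⊕ r) ℝ) : Set (Matrix r q ℝ) :=
  {Z | ((fromRows (1 : Matrix q q ℝ) Z)ᵀ * N * fromRows (1 : Matrix q q ℝ) Z).PosSemidef}

/-- `Z⁺_{q,r}(N) = { Z : [I; Z]ᵀ N [I; Z] ≻ 0 }`. -/
def ZSetP {q r : Type*} [Fintype q] [Fintype r] [DecidableEq q]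
    (N : Matrix (q ⊕ r) (q ⊕ r) ℝ) : Set (Matrix r q ℝ) :=
  {Z | ((fromRows (1 : Matrix q q ℝ) Z)ᵀ * N * fromRows (1 : Matrix q q ℝ) Z).PosDef}

/-- `Π_{q,r}`: symmetric matrices `N` with `N₂₂ ⪯ 0`, `ker N₂₂ ⊆ ker N₁₂` and
`N₁₁ - N₁₂ N₂₂† N₁₂ᵀ ⪰ 0`. -/
def PiSet (q r : Type*) [Fintype q] [Fintype r] : Set (Matrix (q ⊕ r) (q ⊕ r) ℝ) :=
  {N | N.IsSymm ∧ (-(N.toBlocks₂₂)).PosSemidef ∧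
      (∀ x : r → ℝ, N.toBlocks₂₂ *ᵥ x = 0 → N.toBlocks₁₂ *ᵥ x = 0) ∧
      (N.toBlocks₁₁ - N.toBlocks₁₂ * pinv N.toBlocks₂₂ * (N.toBlocks₁₂)ᵀ).PosSemidef}

/-- Row index type of the stacked data matrix `[X₊ᵀ, -Xᵀ, -Uᵀ]ᵀ` (`2n+m` rows). -/
abbrev SRows (n m : ℕ) := Fin n ⊕ (Fin n ⊕ Fin m)

/-- `[I_n A B]`. -/
def sysRow {n m : ℕ} (A : Matrix (Fin n) (Fin n) ℝ) (B : Matrix (Fin n) (Fin m) ℝ) :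
    Matrix (Fin n) (SRows n m) ℝ :=
  fromCols (1 : Matrix (Fin n) (Fin n) ℝ) (fromCols A B)

/-- `𝐗 = [X₊ᵀ, -Xᵀ, -Uᵀ]ᵀ`. -/
def bigX {n m T : ℕ} (Xp X : Matrix (Fin n) (Fin T) ℝ) (U : Matrix (Fin m) (Fin T) ℝ) :
    Matrix (SRows n m) (Fin T) ℝ :=
  fromRows Xp (fromRows (-X) (-U))

/-- The data-perturbation set `𝒟 = { EΔ̂ : Δ̂ᵀ ∈ Z(Φ̂) }`. -/
def Dset {n m T nh : ℕ} (E : Matrix (SRows n m) (Fin nh) ℝ)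
    (Φ : Matrix (Fin nh ⊕ Fin T) (Fin nh ⊕ Fin T) ℝ) :
    Set (Matrix (SRows n m) (Fin T) ℝ) :=
  {Δ | ∃ Δh : Matrix (Fin nh) (Fin T) ℝ, Δhᵀ ∈ ZSet Φ ∧ Δ = E * Δh}

/-- `Σ`: systems consistent with the data. -/
def SigmaSet {n m T nh : ℕ} (Xp X : Matrix (Fin n) (Fin T) ℝ) (U : Matrix (Fin m) (Fin T) ℝ)
    (E : Matrix (SRows n m) (Fin nh) ℝ)
    (Φ : Matrix (Fin nh ⊕ Fin T) (Fin nh ⊕ Fin T) ℝ) :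
    Set (Matrix (Fin n) (Fin n) ℝ × Matrix (Fin n) (Fin m) ℝ) :=
  {AB | ∃ Δ' ∈ Dset E Φ, sysRow AB.1 AB.2 * bigX Xp X U = sysRow AB.1 AB.2 * Δ'}

/-- `N = [E 𝐗] Φ̂ [E 𝐗]ᵀ`. -/
def Nmat {n m T nh : ℕ} (Xp X : Matrix (Fin n) (Fin T) ℝ) (U : Matrix (Fin m) (Fin T) ℝ)
    (E : Matrix (SRows n m) (Fin nh) ℝ)
    (Φ : Matrix (Fin nh ⊕ Fin T) (Fin nh ⊕ Fin T) ℝ) :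
    Matrix (SRows n m) (SRows n m) ℝ :=
  fromCols E (bigX Xp X U) * Φ * (fromCols E (bigX Xp X U))ᵀ

/-- `[I_n; 0]` used in the image condition `im E ⊇ im [I_n; 0]`. -/
def iota0 (n m : ℕ) : Matrix (SRows n m) (Fin n) ℝ :=
  fromRows (1 : Matrix (Fin n) (Fin n) ℝ) (0 : Matrix (Fin n ⊕ Fin m) (Fin n) ℝ)

/-- `ℳ(P,L,β)` with block rows/columns of sizes `(n,n,m,n)`. -/
def Mcal {n m : ℕ} (P : Matrix (Fin n) (Fin n) ℝ) (L : Matrix (Fin m) (Fin n) ℝ) (β : ℝ) :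
    Matrix (SRows n m ⊕ Fin n) (SRows n m ⊕ Fin n) ℝ :=
  fromBlocks
    (fromBlocks (P - β • (1 : Matrix (Fin n) (Fin n) ℝ)) 0 0 (fromBlocks (-P) (-Lᵀ) (-L) 0))
    (fromRows (0 : Matrix (Fin n) (Fin n) ℝ) (fromRows (0 : Matrix (Fin n) (Fin n) ℝ) L))
    (fromCols (0 : Matrix (Fin n) (Fin n) ℝ) (fromCols (0 : Matrix (Fin n) (Fin n) ℝ) Lᵀ))
    P

/-- `diag(N, 0_n)` : the `(3n+m)×(3n+m)` matrix with `N` in the upper-left block. -/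
def dN {n m : ℕ} (N : Matrix (SRows n m) (SRows n m) ℝ) :
    Matrix (SRows n m ⊕ Fin n) (SRows n m ⊕ Fin n) ℝ :=
  fromBlocks N 0 0 0

/-- Data informativity for quadratic stabilization. -/
def InfQStab {n m T nh : ℕ} (Xp X : Matrix (Fin n) (Fin T) ℝ) (U : Matrix (Fin m) (Fin T) ℝ)
    (E : Matrix (SRows n m) (Fin nh) ℝ)
    (Φ : Matrix (Fin nh ⊕ Fin T) (Fin nh ⊕ Fin T) ℝ) : Prop :=
  ∃ (P : Matrix (Fin n) (Fin n) ℝ) (K : Matrix (Fin m) (Fin n) ℝ), P.PosDef ∧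
    ∀ AB ∈ SigmaSet Xp X U E Φ,
      (P - (AB.1 + AB.2 * K) * P * (AB.1 + AB.2 * K)ᵀ).PosDef


lemma exists_mp {k : Type*} [Fintype k] {A : Matrix k k ℝ}
    (hA : A.IsHermitian) : ∃ B : Matrix k k ℝ,
    A * B * A = A ∧ B * A * B = B ∧ (A * B)ᵀ = A * B ∧ (B * A)ᵀ = B * A := by
  classical
  set U : Matrix k k ℝ := (hA.eigenvectorUnitary : Matrix k k ℝ) with hU
  have hUU : Uᵀ * U = 1 := by
    have := mem_unitaryGroup_iff'.mp hA.eigenvectorUnitary.2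
    rwa [star_eq_conjTranspose, conjTranspose_eq_transpose_of_trivial] at this
  set d : k → ℝ := hA.eigenvalues with hd
  set g : k → ℝ := fun i => if d i = 0 then 0 else (d i)⁻¹ with hg
  have hspec : A = U * diagonal d * Uᵀ := by
    have := hA.spectral_theorem
    rw [Unitary.conjStarAlgAut_apply, star_eq_conjTranspose,
      conjTranspose_eq_transpose_of_trivial] at this
    simpa using this
  have key : ∀ e f : k → ℝ, (U * diagonal e * Uᵀ) * (U * diagonal f * Uᵀ)
      = U * diagonal (fun i => e i * f i) * Uᵀ := by
    intro e f
    calc (U * diagonal e * Uᵀ) * (U * diagonal f * Uᵀ)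
        = U * diagonal e * (Uᵀ * U) * (diagonal f * Uᵀ) := by
          simp only [Matrix.mul_assoc]
      _ = U * (diagonal e * diagonal f) * Uᵀ := by
          rw [hUU]; simp only [Matrix.mul_one, Matrix.mul_assoc]
      _ = U * diagonal (fun i => e i * f i) * Uᵀ := by
          rw [diagonal_mul_diagonal]
  have sym : ∀ e : k → ℝ, (U * diagonal e * Uᵀ)ᵀ = U * diagonal e * Uᵀ := by
    intro e
    simp [Matrix.transpose_mul, Matrix.mul_assoc, diagonal_transpose]
  refine ⟨U * diagonal g * Uᵀ, ?_, ?_, ?_, ?_⟩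
  · rw [hspec, key, key]
    congr 1
    congr 1
    apply congrArg diagonal
    funext i
    show (d i * g i) * d i = d i
    by_cases h : d i = 0 <;> simp [hg, h]
  · rw [hspec, key, key]
    congr 1
    congr 1
    apply congrArg diagonal
    funext i
    show (g i * d i) * g i = g i
    by_cases h : d i = 0 <;> simp [hg, h]
  · rw [hspec, key, sym]
  · rw [hspec, key, sym]


lemma pinv_spec {k : Type*} [Fintype k] {A : Matrix k k ℝ} (hA : A.IsHermitian) :
    A * pinv A * A = A ∧ pinv A * A * pinv A = pinv A ∧
    (A * pinv A)ᵀ = A * pinv A ∧ (pinv A * A)ᵀ = pinv A * A := by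
  have h := exists_mp hA
  unfold pinv
  rw [dif_pos h]
  exact h.choose_spec

lemma quad_fromBlocks {q r : Type*} [Fintype q] [Fintype r]
    (A : Matrix q q ℝ) (B : Matrix q r ℝ) (C : Matrix r q ℝ) (D : Matrix r r ℝ)
    (x : q → ℝ) (v : r → ℝ) :
    Sum.elim x v ⬝ᵥ (fromBlocks A B C D *ᵥ Sum.elim x v)
      = x ⬝ᵥ (A *ᵥ x) + x ⬝ᵥ (B *ᵥ v) + v ⬝ᵥ (C *ᵥ x) + v ⬝ᵥ (D *ᵥ v) := by
  simp only [fromBlocks_mulVec, sumElim_dotProduct_sumElim, dotProduct_add,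
    Sum.elim_comp_inl, Sum.elim_comp_inr]
  ring

lemma quad_blocks {q r : Type*} [Fintype q] [Fintype r]
    (M : Matrix (q ⊕ r) (q ⊕ r) ℝ) (x : q → ℝ) (v : r → ℝ) :
    Sum.elim x v ⬝ᵥ (M *ᵥ Sum.elim x v)
      = x ⬝ᵥ (M.toBlocks₁₁ *ᵥ x) + x ⬝ᵥ (M.toBlocks₁₂ *ᵥ v)
        + v ⬝ᵥ (M.toBlocks₂₁ *ᵥ x) + v ⬝ᵥ (M.toBlocks₂₂ *ᵥ v) := by
  conv_lhs => rw [← fromBlocks_toBlocks M]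
  rw [quad_fromBlocks]

lemma dot_swap {a b : Type*} [Fintype a] [Fintype b]
    (M : Matrix a b ℝ) (u : a → ℝ) (w : b → ℝ) :
    u ⬝ᵥ (M *ᵥ w) = w ⬝ᵥ (Mᵀ *ᵥ u) := by
  rw [dotProduct_mulVec, ← mulVec_transpose, dotProduct_comm]

lemma eq_of_mulVec {a b : Type*} [Fintype a] [Fintype b]
    (M₁ M₂ : Matrix a b ℝ) (h : ∀ v, M₁ *ᵥ v = M₂ *ᵥ v) : M₁ = M₂ := by
  classical
  ext i j
  have := congrFun (h (Pi.single j 1)) i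
  simpa [mulVec_single] using this

lemma isHerm_of_isSymm {k : Type*} [Fintype k] {A : Matrix k k ℝ} (h : A.IsSymm) :
    A.IsHermitian := by
  rwa [IsHermitian, conjTranspose_eq_transpose_of_trivial]

lemma toBlocks21_of_isSymm {q r : Type*} {M : Matrix (q ⊕ r) (q ⊕ r) ℝ} (h : M.IsSymm) :
    M.toBlocks₂₁ = M.toBlocks₁₂ᵀ := by
  ext i j
  have := congrFun (congrFun h.eq (Sum.inr i)) (Sum.inl j)
  simpa [toBlocks₂₁, toBlocks₁₂] using this.symm

lemma toBlocks11_of_isSymm {q r : Type*} {M : Matrix (q ⊕ r) (q ⊕ r) ℝ} (h : M.IsSymm) :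
    M.toBlocks₁₁.IsSymm := by
  ext i j
  have := congrFun (congrFun h.eq (Sum.inl i)) (Sum.inl j)
  simpa [toBlocks₁₁, Matrix.IsSymm] using this

lemma toBlocks22_of_isSymm {q r : Type*} {M : Matrix (q ⊕ r) (q ⊕ r) ℝ} (h : M.IsSymm) :
    M.toBlocks₂₂.IsSymm := by
  ext i j
  have := congrFun (congrFun h.eq (Sum.inr i)) (Sum.inr j)
  simpa [toBlocks₂₂, Matrix.IsSymm] using this

lemma qMcal_full {n m : ℕ} (P : Matrix (Fin n) (Fin n) ℝ) (L : Matrix (Fin m) (Fin n) ℝ)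
    (β : ℝ) (x y w : Fin n → ℝ) (z : Fin m → ℝ) :
    Sum.elim (Sum.elim x (Sum.elim y z)) w ⬝ᵥ
        (Mcal P L β *ᵥ Sum.elim (Sum.elim x (Sum.elim y z)) w)
      = x ⬝ᵥ ((P - β • (1 : Matrix (Fin n) (Fin n) ℝ)) *ᵥ x) - y ⬝ᵥ (P *ᵥ y)
        - y ⬝ᵥ (Lᵀ *ᵥ z) - z ⬝ᵥ (L *ᵥ y) + z ⬝ᵥ (L *ᵥ w) + w ⬝ᵥ (Lᵀ *ᵥ z)
        + w ⬝ᵥ (P *ᵥ w) := by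
  rw [Mcal, quad_fromBlocks, quad_fromBlocks]
  simp only [fromRows_mulVec, fromCols_mulVec_sumElim, zero_mulVec, mulVec_zero,
    dotProduct_zero, zero_dotProduct, sumElim_dotProduct_sumElim, quad_fromBlocks,
    neg_mulVec, dotProduct_neg, zero_add, add_zero]
  ring

lemma qdN {n m : ℕ} (N : Matrix (SRows n m) (SRows n m) ℝ) (a : SRows n m → ℝ)
    (w : Fin n → ℝ) :
    Sum.elim a w ⬝ᵥ (dN N *ᵥ Sum.elim a w) = a ⬝ᵥ (N *ᵥ a) := by
  rw [dN, quad_fromBlocks]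
  simp


theorem stmt6 {n m T nh : ℕ} (hn : 0 < n) (hm : 0 < m) (hT : 0 < T) (hnh : 0 < nh)
    (Astar : Matrix (Fin n) (Fin n) ℝ) (Bstar : Matrix (Fin n) (Fin m) ℝ)
    (Xps Xs Xp X ΔXp ΔX : Matrix (Fin n) (Fin T) ℝ) (Us U ΔU : Matrix (Fin m) (Fin T) ℝ)
    (E : Matrix (SRows n m) (Fin nh) ℝ)
    (Φ : Matrix (Fin nh ⊕ Fin T) (Fin nh ⊕ Fin T) ℝ)
    (hΦ : Φ ∈ PiSet (Fin nh) (Fin T))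
    (hclean : Xps = Astar * Xs + Bstar * Us)
    (hXp : Xp = Xps + ΔXp) (hX : X = Xs + ΔX) (hU : U = Us + ΔU)
    (hΔ : bigX ΔXp ΔX ΔU ∈ Dset E Φ)
    (hfeas : ∃ (P : Matrix (Fin n) (Fin n) ℝ) (L : Matrix (Fin m) (Fin n) ℝ) (α β : ℝ),
      P.PosDef ∧ 0 ≤ α ∧ 0 < β ∧
      (Mcal P L β - α • dN (Nmat Xp X U E Φ)).PosSemidef) :
    Nmat Xp X U E Φ ∈ PiSet (Fin n) (Fin n ⊕ Fin m) := by
  classical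
  obtain ⟨P, L, α, β, hP, hα0, hβ, hW⟩ := hfeas
  obtain ⟨hΦsym, -, -, -⟩ := hΦ
  set N := Nmat Xp X U E Φ with hNdef
  set M0 := fromCols E (bigX Xp X U) with hM0
  -- symmetry of N
  have hNsym : N.IsSymm := by
    rw [hNdef, Nmat, Matrix.IsSymm, transpose_mul, transpose_mul, transpose_transpose,
      hΦsym.eq, Matrix.mul_assoc]
  have h21 : N.toBlocks₂₁ = N.toBlocks₁₂ᵀ := toBlocks21_of_isSymm hNsym
  -- the quadratic form of the LMI
  have hWq : ∀ u : (SRows n m ⊕ Fin n) → ℝ,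
      0 ≤ u ⬝ᵥ ((Mcal P L β - α • dN N) *ᵥ u) := by
    intro u
    simpa using hW.dotProduct_mulVec_nonneg u
  have key0 : ∀ (x y : Fin n → ℝ) (z : Fin m → ℝ),
      α * (Sum.elim x (Sum.elim y z) ⬝ᵥ (N *ᵥ Sum.elim x (Sum.elim y z)))
        ≤ x ⬝ᵥ ((P - β • (1 : Matrix (Fin n) (Fin n) ℝ)) *ᵥ x) := by
    intro x y z
    have h := hWq (Sum.elim (Sum.elim x (Sum.elim y z)) y)
    rw [sub_mulVec, dotProduct_sub, qMcal_full, smul_mulVec, dotProduct_smul,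
      qdN, smul_eq_mul] at h
    linarith
  have key : ∀ (x : Fin n → ℝ) (v : (Fin n ⊕ Fin m) → ℝ),
      α * (Sum.elim x v ⬝ᵥ (N *ᵥ Sum.elim x v))
        ≤ x ⬝ᵥ ((P - β • (1 : Matrix (Fin n) (Fin n) ℝ)) *ᵥ x) := by
    intro x v
    have h := key0 x (v ∘ Sum.inl) (v ∘ Sum.inr)
    rwa [Sum.elim_comp_inl_inr] at h
  -- positivity of α
  have hαpos : 0 < α := by
    rcases hα0.lt_or_eq with h | h
    · exact h
    exfalso
    have hy : (fun _ : Fin n => (1 : ℝ)) ≠ 0 := by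
      intro h0
      have := congrFun h0 ⟨0, hn⟩
      norm_num at this
    have h2 := hWq (Sum.elim (Sum.elim 0 (Sum.elim (fun _ => (1 : ℝ)) 0)) 0)
    rw [sub_mulVec, dotProduct_sub, qMcal_full, smul_mulVec, dotProduct_smul,
      qdN, smul_eq_mul, ← h] at h2
    have h3 := hP.dotProduct_mulVec_pos hy
    simp only [star_trivial] at h3
    simp only [zero_dotProduct, dotProduct_zero, mulVec_zero, zero_mul, sub_zero,
      add_zero, zero_add, zero_sub, zero_mulVec] at h2
    linarith
  -- N₂₂ ⪯ 0 (quadratic form version)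
  have hN22q : ∀ v : (Fin n ⊕ Fin m) → ℝ, v ⬝ᵥ (N.toBlocks₂₂ *ᵥ v) ≤ 0 := by
    intro v
    have h := key 0 v
    rw [quad_blocks] at h
    simp only [zero_dotProduct, mulVec_zero, dotProduct_zero, zero_add, add_zero] at h
    exact le_of_not_gt fun hq => absurd h (not_le.mpr (mul_pos hαpos hq))
  have hPSD22 : (-(N.toBlocks₂₂)).PosSemidef := by
    refine Matrix.PosSemidef.of_dotProduct_mulVec_nonneg ?_ ?_
    · apply isHerm_of_isSymm
      rw [Matrix.IsSymm, transpose_neg, (toBlocks22_of_isSymm hNsym).eq]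
    · intro v
      have h := hN22q v
      simp only [star_trivial, neg_mulVec, dotProduct_neg]
      linarith
  -- kernel inclusion
  have hker : ∀ v : (Fin n ⊕ Fin m) → ℝ,
      N.toBlocks₂₂ *ᵥ v = 0 → N.toBlocks₁₂ *ᵥ v = 0 := by
    intro v hv
    rw [← dotProduct_self_eq_zero]
    by_contra hs
    have hnn : 0 ≤ (N.toBlocks₁₂ *ᵥ v) ⬝ᵥ (N.toBlocks₁₂ *ᵥ v) :=
      Finset.sum_nonneg fun i _ => mul_self_nonneg _
    have hspos : 0 < (N.toBlocks₁₂ *ᵥ v) ⬝ᵥ (N.toBlocks₁₂ *ᵥ v) :=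
      lt_of_le_of_ne hnn (Ne.symm hs)
    set x := N.toBlocks₁₂ *ᵥ v with hx
    set c := x ⬝ᵥ ((P - β • (1 : Matrix (Fin n) (Fin n) ℝ)) *ᵥ x) with hc
    set s := x ⬝ᵥ x with hs2
    set q0 := x ⬝ᵥ (N.toBlocks₁₁ *ᵥ x) with hq0'
    have H : ∀ t : ℝ, α * q0 + t * (2 * α * s) ≤ c := by
      intro t
      have h := key x (t • v)
      rw [quad_blocks, h21] at h
      simp only [mulVec_smul, hv, smul_zero, dotProduct_zero, add_zero,
        dotProduct_smul, smul_dotProduct, smul_eq_mul] at h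
      have e : v ⬝ᵥ (N.toBlocks₁₂ᵀ *ᵥ x) = x ⬝ᵥ (N.toBlocks₁₂ *ᵥ v) := by
        rw [dot_swap, transpose_transpose]
      rw [e, ← hx, ← hq0', ← hs2, ← hc] at h
      have e2 : α * (q0 + t * s + t * s) = α * q0 + t * (2 * α * s) := by ring
      rw [e2] at h
      exact h
    have hb : (0 : ℝ) < 2 * α * s := by nlinarith [mul_pos hαpos hspos]
    have hH := H ((c - α * q0 + 1) / (2 * α * s))
    rw [div_mul_cancel₀ _ (ne_of_gt hb)] at hH
    linarith
  -- the true system gives a PSD quadratic form on N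
  obtain ⟨Δh, hZ, hEΔ⟩ := hΔ
  set G := sysRow Astar Bstar with hG
  have hGB : ∀ (Pm Q : Matrix (Fin n) (Fin T) ℝ) (R : Matrix (Fin m) (Fin T) ℝ),
      G * bigX Pm Q R = Pm - Astar * Q - Bstar * R := by
    intro Pm Q R
    rw [hG, sysRow, bigX, fromCols_mul_fromRows, fromCols_mul_fromRows,
      Matrix.one_mul, Matrix.mul_neg, Matrix.mul_neg]
    abel
  have hGX : G * bigX Xp X U = G * E * Δh := by
    calc G * bigX Xp X U = Xp - Astar * X - Bstar * U := hGB _ _ _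
      _ = ΔXp - Astar * ΔX - Bstar * ΔU := by
          rw [hXp, hX, hU, hclean]
          simp only [Matrix.mul_add]
          abel
      _ = G * bigX ΔXp ΔX ΔU := (hGB _ _ _).symm
      _ = G * (E * Δh) := by rw [hEΔ]
      _ = G * E * Δh := (Matrix.mul_assoc _ _ _).symm
  have hGM : G * M0 = (G * E) * fromCols 1 Δh := by
    rw [hM0, mul_fromCols, mul_fromCols, Matrix.mul_one, hGX]
  have hQm : (fromCols (1 : Matrix (Fin nh) (Fin nh) ℝ) Δh * Φ
      * (fromCols (1 : Matrix (Fin nh) (Fin nh) ℝ) Δh)ᵀ).PosSemidef := by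
    have h := hZ
    rw [ZSet, Set.mem_setOf_eq] at h
    have e : (fromRows (1 : Matrix (Fin nh) (Fin nh) ℝ) Δhᵀ)ᵀ = fromCols 1 Δh := by
      rw [transpose_fromRows, transpose_one, transpose_transpose]
    rw [← e, transpose_transpose]
    exact h
  have hGNG : G * N * Gᵀ = (G * E) * (fromCols (1 : Matrix (Fin nh) (Fin nh) ℝ) Δh * Φ
      * (fromCols (1 : Matrix (Fin nh) (Fin nh) ℝ) Δh)ᵀ)
      * (G * E)ᵀ := by
    have e1 : N = M0 * Φ * M0ᵀ := by rw [hNdef, Nmat, hM0]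
    rw [e1]
    calc G * (M0 * Φ * M0ᵀ) * Gᵀ = (G * M0) * Φ * (G * M0)ᵀ := by
          simp only [Matrix.mul_assoc, Matrix.transpose_mul]
      _ = (G * E) * (fromCols (1 : Matrix (Fin nh) (Fin nh) ℝ) Δh * Φ
          * (fromCols (1 : Matrix (Fin nh) (Fin nh) ℝ) Δh)ᵀ) * (G * E)ᵀ := by
          rw [hGM]
          simp only [Matrix.mul_assoc, Matrix.transpose_mul]
  have hGNGpsd : (G * N * Gᵀ).PosSemidef := by
    rw [hGNG]
    have h := hQm.mul_mul_conjTranspose_same (G * E)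
    rwa [conjTranspose_eq_transpose_of_trivial] at h
  set Zs := (fromCols Astar Bstar)ᵀ with hZs
  have hGT : ∀ x : Fin n → ℝ, Gᵀ *ᵥ x = Sum.elim x (Zs *ᵥ x) := by
    intro x
    rw [hG, sysRow, transpose_fromCols, transpose_one, fromRows_mulVec, one_mulVec]
  have hq0 : ∀ x : Fin n → ℝ,
      0 ≤ Sum.elim x (Zs *ᵥ x) ⬝ᵥ (N *ᵥ Sum.elim x (Zs *ᵥ x)) := by
    intro x
    have h := hGNGpsd.dotProduct_mulVec_nonneg x
    simp only [star_trivial] at h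
    rw [← mulVec_mulVec, ← mulVec_mulVec, dot_swap, hGT, dotProduct_comm] at h
    exact h
  -- Schur complement
  have hSchur : (N.toBlocks₁₁ - N.toBlocks₁₂ * pinv N.toBlocks₂₂
      * N.toBlocks₁₂ᵀ).PosSemidef := by
    set A := N.toBlocks₂₂ with hA
    set K := N.toBlocks₁₂ with hK
    have hAsym : A.IsSymm := toBlocks22_of_isSymm hNsym
    obtain ⟨mp1, mp2, mp3, mp4⟩ := pinv_spec (isHerm_of_isSymm hAsym)
    have hAAp : A * (A * pinv A) = A := by
      have h := congrArg Matrix.transpose mp1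
      rw [transpose_mul, mp3, hAsym.eq] at h
      exact h
    have hKAA : K * A * pinv A = K := by
      rw [Matrix.mul_assoc]
      apply eq_of_mulVec
      intro v
      have h0 : A *ᵥ ((A * pinv A) *ᵥ v - v) = 0 := by
        rw [mulVec_sub, mulVec_mulVec, hAAp, sub_self]
      have h1 := hker _ h0
      rw [mulVec_sub, sub_eq_zero] at h1
      rw [mulVec_mulVec] at h1
      exact h1
    have hAKT : A * pinv A * Kᵀ = Kᵀ := by
      calc A * pinv A * Kᵀ = (A * pinv A)ᵀ * Kᵀ := by rw [mp3]
        _ = (K * (A * pinv A))ᵀ := by rw [transpose_mul K (A * pinv A)]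
        _ = Kᵀ := by rw [← Matrix.mul_assoc, hKAA]
    have hpAtA : (pinv A)ᵀ * A = A * pinv A := by
      calc (pinv A)ᵀ * A = (pinv A)ᵀ * Aᵀ := by rw [hAsym.eq]
        _ = (A * pinv A)ᵀ := by rw [← transpose_mul]
        _ = A * pinv A := mp3
    have e0 : (pinv A)ᵀ * Kᵀ = A * pinv A * (pinv A * Kᵀ) := by
      conv_lhs => rw [← hAKT]
      rw [← Matrix.mul_assoc, ← Matrix.mul_assoc, hpAtA]
      simp only [Matrix.mul_assoc]
    have hsymS : (K * pinv A * Kᵀ)ᵀ = K * pinv A * Kᵀ := by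
      calc (K * pinv A * Kᵀ)ᵀ = K * ((pinv A)ᵀ * Kᵀ) := by
            rw [transpose_mul, transpose_mul, transpose_transpose]
        _ = K * (A * pinv A * (pinv A * Kᵀ)) := by rw [e0]
        _ = K * A * pinv A * (pinv A * Kᵀ) := by simp only [Matrix.mul_assoc]
        _ = K * pinv A * Kᵀ := by
            rw [hKAA]
            simp only [Matrix.mul_assoc]
    refine Matrix.PosSemidef.of_dotProduct_mulVec_nonneg ?_ ?_
    · apply isHerm_of_isSymm
      rw [Matrix.IsSymm, transpose_sub, hsymS, (toBlocks11_of_isSymm hNsym).eq]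
    · intro x
      set p := Kᵀ *ᵥ x with hp
      set w := pinv A *ᵥ p with hw
      set v := Zs *ᵥ x with hv
      have hAw : A *ᵥ w = p := by
        rw [hw, hp, mulVec_mulVec, mulVec_mulVec, hAKT]
      have hq := hq0 x
      rw [quad_blocks, h21, ← hA, ← hK, ← hv, ← hp] at hq
      have e1 : x ⬝ᵥ (K *ᵥ v) = v ⬝ᵥ p := by rw [dot_swap, hp]
      have hneg := hN22q (w + v)
      have e4 : w ⬝ᵥ (A *ᵥ v) = v ⬝ᵥ p := by
        rw [dot_swap, hAsym.eq, hAw]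
      have e3 : (w + v) ⬝ᵥ (A *ᵥ (w + v))
          = w ⬝ᵥ p + v ⬝ᵥ p + v ⬝ᵥ p + v ⬝ᵥ (A *ᵥ v) := by
        rw [mulVec_add, dotProduct_add, add_dotProduct, add_dotProduct, hAw, e4]
        ring
      simp only [star_trivial]
      rw [sub_mulVec, dotProduct_sub, ← mulVec_mulVec, ← mulVec_mulVec, ← hp, ← hw]
      have e6 : x ⬝ᵥ (K *ᵥ w) = w ⬝ᵥ p := by rw [dot_swap, hp]
      rw [e6]
      rw [e3] at hneg
      rw [e1] at hq
      linarith
  exact ⟨hNsym, hPSD22, hker, hSchur⟩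

end
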